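/- Let H be a real Hilbert space and f : H → ℝ ∪ {+∞} a proper lower semicontinuous convex function. Then for every λ > 0 and every x ∈ H, the infimum defining f_λ(x) = inf_{y ∈ H} { f(y) + ‖x-y‖²/(2λ) } is attained at a unique point (the proximal point of x), and f_λ is Fréchet differentiable at every x ∈ H with ∇f_λ(x) = (x - prox_{λf}(x))/λ. -/

import Mathlib

open Filter Topology

section MoreauAux
variable {H : Type*} [NormedAddCommGroup H] [InnerProductSpace ℝ H]

lemma moreau_aux_minorant {H : Type*} [NormedAddCommGroup H] [InnerProductSpace ℝ H]
    (f : H → EReal) (hbot : ∀ x, f x ≠ ⊥) (hproper : ∃ x, f x ≠ ⊤)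
    (hlsc : LowerSemicontinuous f)
    (hconv : ∀ x y : H, ∀ t ∈ Set.Icc (0 : ℝ) 1,
      f (t • x + (1 - t) • y) ≤ (t : EReal) * f x + ((1 - t : ℝ) : EReal) * f y) :
    ∃ A C : ℝ, 0 ≤ A ∧ ∀ y, ((C - A * ‖y‖ : ℝ) : EReal) ≤ f y := by
  obtain ⟨x0, hx0⟩ := hproper
  set r0 : ℝ := (f x0).toReal with hr0
  have hfx0 : f x0 = (r0 : EReal) := (EReal.coe_toReal hx0 (hbot x0)).symm
  set S : Set (H × ℝ) := {p | f p.1 ≤ (p.2 : EReal)} with hS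
  have hSconv : Convex ℝ S := by
    rintro ⟨y, s⟩ hy ⟨z, t⟩ hz a b ha hb hab
    simp only [hS, Set.mem_setOf_eq] at hy hz ⊢
    have hb' : b = 1 - a := by linarith
    have h1 : f (a • y + (1 - a) • z) ≤ (a : EReal) * f y + ((1 - a : ℝ) : EReal) * f z :=
      hconv y z a ⟨ha, by linarith⟩
    have h2 : (a : EReal) * f y ≤ (a : EReal) * (s : EReal) :=
      mul_le_mul_of_nonneg_left hy (by exact_mod_cast ha)
    have h3 : ((1 - a : ℝ) : EReal) * f z ≤ ((1 - a : ℝ) : EReal) * (t : EReal) :=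
      mul_le_mul_of_nonneg_left hz (by exact_mod_cast (by linarith : (0:ℝ) ≤ 1 - a))
    have : f (a • y + (1 - a) • z) ≤ ((a * s + (1 - a) * t : ℝ) : EReal) := by
      refine h1.trans ?_
      rw [EReal.coe_add, EReal.coe_mul, EReal.coe_mul]
      exact add_le_add h2 h3
    simpa [hb', Prod.smul_def, smul_eq_mul] using this
  have hSclosed : IsClosed S := by
    rw [← isOpen_compl_iff]
    rw [isOpen_iff_mem_nhds]
    rintro ⟨y, s⟩ hp
    simp only [hS, Set.mem_compl_iff, Set.mem_setOf_eq, not_le] at hp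
    obtain ⟨r, hr1, hr2⟩ := EReal.lt_iff_exists_real_btwn.1 hp
    have h1 : ∀ᶠ z in 𝓝 y, (r : EReal) < f z := hlsc y r hr2
    have h2 : ∀ᶠ t : ℝ in 𝓝 s, t < r := Filter.Tendsto.eventually_lt_const (by exact_mod_cast hr1) tendsto_id
    have := (h1.prod_nhds h2 : ∀ᶠ p : H × ℝ in 𝓝 (y, s), (r : EReal) < f p.1 ∧ p.2 < r)
    filter_upwards [this] with p hp2
    simp only [Set.mem_compl_iff, hS, Set.mem_setOf_eq, not_le]
    exact lt_trans (by exact_mod_cast hp2.2) hp2.1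
  have hp0 : ((x0, r0 - 1) : H × ℝ) ∉ S := by
    simp only [hS, Set.mem_setOf_eq, hfx0]
    exact not_le.2 (by exact_mod_cast (by linarith : r0 - 1 < r0))
  obtain ⟨Φ, u, hΦ0, hΦS⟩ := geometric_hahn_banach_point_closed hSconv hSclosed hp0
  set a : ℝ := Φ (0, 1) with ha
  set ψ : H → ℝ := fun y => Φ (y, 0) with hψ
  have hdecomp : ∀ (y : H) (t : ℝ), Φ (y, t) = ψ y + t * a := by
    intro y t
    have : ((y, t) : H × ℝ) = (y, 0) + t • (0, 1) := by
      simp [Prod.ext_iff]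
    rw [this, map_add, map_smul]
    simp [hψ, ha, smul_eq_mul]
  have hmem : ∀ t : ℝ, r0 ≤ t → u < ψ x0 + t * a := by
    intro t ht
    have : ((x0, t) : H × ℝ) ∈ S := by
      simp only [hS, Set.mem_setOf_eq, hfx0]; exact_mod_cast ht
    have := hΦS _ this
    rwa [hdecomp] at this
  have hΦ0' : ψ x0 + (r0 - 1) * a < u := by rw [← hdecomp]; exact hΦ0
  have hane : a ≠ 0 := by
    intro h0
    have h1 := hmem r0 le_rfl
    rw [h0] at h1 hΦ0'
    simp at h1 hΦ0'
    linarith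
  have hapos : 0 < a := by
    rcases lt_or_gt_of_ne hane with hneg | hpos
    · exfalso
      have ht : max r0 ((u - ψ x0) / a) ≥ r0 := le_max_left _ _
      have := hmem _ ht
      have h2 : max r0 ((u - ψ x0) / a) ≥ (u - ψ x0) / a := le_max_right _ _
      have h3 : (max r0 ((u - ψ x0) / a)) * a ≤ u - ψ x0 := by
        calc (max r0 ((u - ψ x0) / a)) * a ≤ ((u - ψ x0) / a) * a :=
              mul_le_mul_of_nonpos_right h2 hneg.le
        _ = u - ψ x0 := div_mul_cancel₀ _ hane
      linarith
    · exact hpos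
  -- minorant : f y ≥ (u - ψ y)/a
  have hmin : ∀ y, (((u - ψ y) / a : ℝ) : EReal) ≤ f y := by
    intro y
    rcases eq_or_ne (f y) ⊤ with h | h
    · rw [h]; exact le_top
    · have hfy : f y = ((f y).toReal : EReal) := (EReal.coe_toReal h (hbot y)).symm
      have : ((y, (f y).toReal) : H × ℝ) ∈ S := by
        simp only [hS, Set.mem_setOf_eq]
        conv_lhs => rw [hfy]
      have h1 := hΦS _ this
      rw [hdecomp] at h1
      rw [hfy]
      exact_mod_cast (by rw [div_le_iff₀ hapos]; linarith : (u - ψ y) / a ≤ (f y).toReal)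
  -- turn into norm bound
  have hcont : ∃ K : ℝ, 0 ≤ K ∧ ∀ y : H, |ψ y| ≤ K * ‖y‖ := by
    refine ⟨‖Φ‖, ContinuousLinearMap.opNorm_nonneg Φ, fun y => ?_⟩
    have h1 : |ψ y| = ‖Φ (y, 0)‖ := by simp [hψ]
    rw [h1]
    calc ‖Φ (y, 0)‖ ≤ ‖Φ‖ * ‖((y, 0) : H × ℝ)‖ := Φ.le_opNorm _
    _ = ‖Φ‖ * ‖y‖ := by rw [Prod.norm_def]; simp
  obtain ⟨K, hK0, hK⟩ := hcont
  refine ⟨K / a, u / a, div_nonneg hK0 hapos.le, fun y => ?_⟩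
  refine le_trans ?_ (hmin y)
  apply EReal.coe_le_coe_iff.2
  have h1 : ψ y ≤ K * ‖y‖ := (abs_le.1 (hK y)).2
  calc u / a - K / a * ‖y‖ = (u - K * ‖y‖) / a := by ring
  _ ≤ (u - ψ y) / a := (div_le_div_iff_of_pos_right hapos).2 (by linarith)


lemma moreau_aux_lsc {H : Type*} [NormedAddCommGroup H] [InnerProductSpace ℝ H]
    (f : H → EReal) (hbot : ∀ x, f x ≠ ⊥) (l : ℝ) (hlsc : LowerSemicontinuous f) (x : H) :
    LowerSemicontinuous (fun y => f y + ((‖x - y‖ ^ 2 / (2 * l) : ℝ) : EReal)) := by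
  set q : H → ℝ := fun y => ‖x - y‖ ^ 2 / (2 * l) with hq
  have hqc : Continuous q := (((continuous_const.sub continuous_id).norm.pow 2).div_const _)
  intro y0 c hc
  rcases eq_or_ne c ⊥ with rfl | hcbot
  · filter_upwards with y
    refine Ne.bot_lt ?_
    simp only [ne_eq, EReal.add_eq_bot_iff]
    push_neg
    exact ⟨hbot y, EReal.coe_ne_bot _⟩
  have hctop : c ≠ ⊤ := hc.ne_top
  lift c to ℝ using ⟨hctop, hcbot⟩
  have hc2 : (c : EReal) < f y0 + ((q y0 : ℝ) : EReal) := hc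
  have h1 : ((c - q y0 : ℝ) : EReal) < f y0 := by
    rcases eq_or_ne (f y0) ⊤ with h | h
    · rw [h]; exact EReal.coe_lt_top _
    · have hfy : f y0 = ((f y0).toReal : EReal) := (EReal.coe_toReal h (hbot y0)).symm
      rw [hfy] at hc2 ⊢
      have hc' : (c : EReal) < (((f y0).toReal + q y0 : ℝ) : EReal) := by
        rwa [EReal.coe_add]
      have : c < (f y0).toReal + q y0 := by exact_mod_cast hc'
      exact_mod_cast (by linarith : c - q y0 < (f y0).toReal)
  obtain ⟨s, hs1, hs2⟩ := EReal.lt_iff_exists_real_btwn.1 h1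
  have hev1 : ∀ᶠ y in 𝓝 y0, (s : EReal) < f y := hlsc y0 s hs2
  have hs1' : c - q y0 < s := by exact_mod_cast hs1
  have hev2 : ∀ᶠ y in 𝓝 y0, c - s < q y :=
    hqc.continuousAt.eventually (eventually_gt_nhds (by linarith : c - s < q y0))
  filter_upwards [hev1, hev2] with y h2 h3
  calc (c : EReal) = ((s + (c - s) : ℝ) : EReal) := by norm_num
  _ < f y + q y := by
      rw [EReal.coe_add]
      exact EReal.add_lt_add h2 (by exact_mod_cast h3)

lemma moreau_aux_mid {H : Type*} [NormedAddCommGroup H] [InnerProductSpace ℝ H]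
    (f : H → EReal) (hbot : ∀ x, f x ≠ ⊥)
    (hconv : ∀ x y : H, ∀ t ∈ Set.Icc (0 : ℝ) 1,
      f (t • x + (1 - t) • y) ≤ (t : EReal) * f x + ((1 - t : ℝ) : EReal) * f y)
    (l : ℝ) (hl : 0 < l) (x y z : H) (hy : f y ≠ ⊤) (hz : f z ≠ ⊤) :
    f ((1/2 : ℝ) • y + (1/2 : ℝ) • z)
        + ((‖x - ((1/2 : ℝ) • y + (1/2 : ℝ) • z)‖ ^ 2 / (2 * l) : ℝ) : EReal)
      ≤ (((((f y).toReal + ‖x - y‖ ^ 2 / (2 * l)) + ((f z).toReal + ‖x - z‖ ^ 2 / (2 * l))) / 2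
          - ‖y - z‖ ^ 2 / (8 * l) : ℝ) : EReal) := by
  set m : H := (1/2 : ℝ) • y + (1/2 : ℝ) • z with hm
  have hfy : f y = ((f y).toReal : EReal) := (EReal.coe_toReal hy (hbot y)).symm
  have hfz : f z = ((f z).toReal : EReal) := (EReal.coe_toReal hz (hbot z)).symm
  have h1 : f m ≤ ((((f y).toReal + (f z).toReal) / 2 : ℝ) : EReal) := by
    have h := hconv y z (1/2) ⟨by norm_num, by norm_num⟩
    rw [hfy, hfz, ← EReal.coe_mul, ← EReal.coe_mul, ← EReal.coe_add] at h
    have harg : (1 - (1/2 : ℝ)) = (1/2 : ℝ) := by norm_num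
    rw [harg] at h
    refine h.trans ?_
    exact_mod_cast le_of_eq (by ring)
  have h2 : ‖x - m‖ ^ 2 = (‖x - y‖ ^ 2 + ‖x - z‖ ^ 2) / 2 - ‖y - z‖ ^ 2 / 4 := by
    have hpar := parallelogram_law_with_norm ℝ (x - y) (x - z)
    have e1 : (x - y) + (x - z) = (2 : ℝ) • (x - m) := by
      rw [hm]; module
    have e2 : (x - y) - (x - z) = z - y := by abel
    rw [e1, e2] at hpar
    have e3 : ‖(2 : ℝ) • (x - m)‖ = 2 * ‖x - m‖ := by
      rw [norm_smul]; simp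
    rw [e3, norm_sub_rev z y] at hpar
    nlinarith [hpar]
  calc f m + ((‖x - m‖ ^ 2 / (2 * l) : ℝ) : EReal)
      ≤ ((((f y).toReal + (f z).toReal) / 2 : ℝ) : EReal) + ((‖x - m‖ ^ 2 / (2 * l) : ℝ) : EReal) :=
        add_le_add h1 le_rfl
  _ = ((((f y).toReal + (f z).toReal) / 2 + ‖x - m‖ ^ 2 / (2 * l) : ℝ) : EReal) := by
        rw [EReal.coe_add]
  _ ≤ _ := by
        apply EReal.coe_le_coe_iff.2
        rw [h2]
        have hl' : (l : ℝ) ≠ 0 := ne_of_gt hl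
        apply le_of_eq
        field_simp
        ring


lemma moreau_aux_exists [CompleteSpace H]
    (f : H → EReal) (hbot : ∀ x, f x ≠ ⊥) (hproper : ∃ x, f x ≠ ⊤)
    (hlsc : LowerSemicontinuous f)
    (hconv : ∀ x y : H, ∀ t ∈ Set.Icc (0 : ℝ) 1,
      f (t • x + (1 - t) • y) ≤ (t : EReal) * f x + ((1 - t : ℝ) : EReal) * f y)
    (l : ℝ) (hl : 0 < l) (x : H) :
    ∃ y : H, ∀ z : H,
      f y + ((‖x - y‖ ^ 2 / (2 * l) : ℝ) : EReal) ≤ f z + ((‖x - z‖ ^ 2 / (2 * l) : ℝ) : EReal) := by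
  obtain ⟨A, C, hA0, hAC⟩ := moreau_aux_minorant f hbot hproper hlsc hconv
  set g : H → EReal := fun y => f y + ((‖x - y‖ ^ 2 / (2 * l) : ℝ) : EReal) with hg
  have hgbot : ∀ y, g y ≠ ⊥ := by
    intro y
    simp only [hg, ne_eq, EReal.add_eq_bot_iff]
    push_neg
    exact ⟨hbot y, EReal.coe_ne_bot _⟩
  -- lower bound
  set B : ℝ := C - A * ‖x‖ - l * A ^ 2 / 2 with hB
  have hlb : ∀ y, (B : EReal) ≤ g y := by
    intro y
    have h1 : ((C - A * ‖y‖ : ℝ) : EReal) + ((‖x - y‖ ^ 2 / (2 * l) : ℝ) : EReal) ≤ g y :=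
      add_le_add (hAC y) le_rfl
    refine le_trans ?_ h1
    rw [← EReal.coe_add]
    apply EReal.coe_le_coe_iff.2
    have h2 : ‖y‖ ≤ ‖x‖ + ‖x - y‖ := by
      have := norm_sub_norm_le y x
      rw [norm_sub_rev y x] at this
      linarith
    have h3 : A * ‖x - y‖ - l * A ^ 2 / 2 ≤ ‖x - y‖ ^ 2 / (2 * l) := by
      rw [le_div_iff₀ (by positivity : (0:ℝ) < 2 * l)]
      nlinarith [sq_nonneg (‖x - y‖ - l * A)]
    have h4 : A * ‖y‖ ≤ A * (‖x‖ + ‖x - y‖) := mul_le_mul_of_nonneg_left h2 hA0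
    rw [hB]; linarith
  set m : EReal := ⨅ z, g z with hm
  have hmB : (B : EReal) ≤ m := le_iInf hlb
  obtain ⟨x0, hx0⟩ := hproper
  have hmtop : m ≠ ⊤ := by
    refine ne_top_of_le_ne_top ?_ (iInf_le g x0)
    exact (EReal.add_lt_top hx0 (EReal.coe_ne_top _)).ne
  have hmbot : m ≠ ⊥ := ne_bot_of_le_ne_bot (EReal.coe_ne_bot B) hmB
  set M : ℝ := m.toReal with hM
  have hmM : m = (M : EReal) := (EReal.coe_toReal hmtop hmbot).symm
  -- minimizing sequence
  have hseq : ∀ n : ℕ, ∃ y, g y < ((M + 1 / (n + 1) : ℝ) : EReal) := by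
    intro n
    rw [← iInf_lt_iff, ← hm, hmM]
    have h0 : M < M + 1 / ((n:ℝ) + 1) := by
      have : (0:ℝ) < 1 / ((n:ℝ) + 1) := by positivity
      linarith
    exact_mod_cast h0
  choose Y hY using hseq
  have hYtop : ∀ n, f (Y n) ≠ ⊤ := by
    intro n h
    have h2 := hY n
    have h3 : g (Y n) = ⊤ := by simp only [hg, h, EReal.top_add_coe]
    rw [h3] at h2
    exact not_top_lt h2
  have hYbot := fun n => hbot (Y n)
  have hgY : ∀ n, g (Y n) = (((f (Y n)).toReal + ‖x - Y n‖ ^ 2 / (2 * l) : ℝ) : EReal) := by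
    intro n
    simp only [hg]
    rw [EReal.coe_add, EReal.coe_toReal (hYtop n) (hYbot n)]
  set G : ℕ → ℝ := fun n => (f (Y n)).toReal + ‖x - Y n‖ ^ 2 / (2 * l) with hG
  have hGlt : ∀ n, G n < M + 1 / (n + 1) := by
    intro n
    have := hY n
    rw [hgY n] at this
    exact_mod_cast this
  have hGge : ∀ n, M ≤ G n := by
    intro n
    have h1 : m ≤ g (Y n) := iInf_le g (Y n)
    rw [hmM, hgY n] at h1
    exact_mod_cast h1
  -- key midpoint estimate
  have hkey : ∀ n k : ℕ, ‖Y n - Y k‖ ^ 2 ≤ 8 * l * ((G n + G k) / 2 - M) := by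
    intro n k
    have h1 := moreau_aux_mid f hbot hconv l hl x (Y n) (Y k) (hYtop n) (hYtop k)
    have h2 : m ≤ f ((1/2 : ℝ) • Y n + (1/2 : ℝ) • Y k)
        + ((‖x - ((1/2 : ℝ) • Y n + (1/2 : ℝ) • Y k)‖ ^ 2 / (2 * l) : ℝ) : EReal) :=
      iInf_le g _
    rw [hmM] at h2
    have h3 : (M : EReal) ≤ (((G n + G k) / 2 - ‖Y n - Y k‖ ^ 2 / (8 * l) : ℝ) : EReal) := by
      refine h2.trans (h1.trans ?_)
      exact_mod_cast le_of_eq (by rw [hG])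
    have h4 : M ≤ (G n + G k) / 2 - ‖Y n - Y k‖ ^ 2 / (8 * l) := by exact_mod_cast h3
    have h5 : ‖Y n - Y k‖ ^ 2 / (8 * l) ≤ (G n + G k) / 2 - M := by linarith
    rw [div_le_iff₀ (by positivity : (0:ℝ) < 8 * l)] at h5
    linarith
  have hbound : ∀ n k : ℕ, ‖Y n - Y k‖ ^ 2 ≤ 4 * l * (1 / (n + 1) + 1 / (k + 1)) := by
    intro n k
    have := hkey n k
    have h1 := hGlt n; have h2 := hGlt k
    nlinarith [hl]
  -- Cauchy
  have hcauchy : CauchySeq Y := by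
    rw [Metric.cauchySeq_iff']
    intro ε hε
    obtain ⟨N, hN⟩ := exists_nat_gt (8 * l / ε ^ 2)
    refine ⟨N, fun n hn => ?_⟩
    have h8l : (0:ℝ) < 8 * l := by positivity
    have hNpos : (0:ℝ) < (N:ℝ) + 1 := by positivity
    have hstep : 8 * l / ε ^ 2 < (N:ℝ) + 1 := hN.trans (by linarith)
    have h1 : ‖Y n - Y N‖ ^ 2 ≤ 4 * l * (1 / (n + 1) + 1 / (N + 1)) := hbound n N
    have h2 : 1 / ((n:ℝ) + 1) ≤ 1 / ((N:ℝ) + 1) := by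
      apply one_div_le_one_div_of_le hNpos
      exact_mod_cast Nat.succ_le_succ hn
    have h3 : ‖Y n - Y N‖ ^ 2 ≤ 8 * l / ((N:ℝ) + 1) := by
      calc ‖Y n - Y N‖ ^ 2 ≤ 4 * l * (1 / (n + 1) + 1 / (N + 1)) := h1
      _ ≤ 4 * l * (2 / ((N:ℝ) + 1)) := by
          refine mul_le_mul_of_nonneg_left ?_ (by positivity : (0:ℝ) ≤ 4 * l)
          rw [show (2:ℝ)/((N:ℝ)+1) = 1/((N:ℝ)+1) + 1/((N:ℝ)+1) by ring]
          linarith [h2]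
      _ = 8 * l / ((N:ℝ) + 1) := by ring
    have h4 : 8 * l / ((N:ℝ) + 1) < ε ^ 2 := by
      rw [div_lt_iff₀ hNpos]
      rw [div_lt_iff₀ (by positivity : (0:ℝ) < ε ^ 2)] at hstep
      linarith [hstep]
    rw [dist_eq_norm]
    have h5 : ‖Y n - Y N‖ ^ 2 < ε ^ 2 := lt_of_le_of_lt h3 h4
    nlinarith [norm_nonneg (Y n - Y N), hε]
  obtain ⟨y, hy⟩ := cauchySeq_tendsto_of_complete hcauchy
  -- g y ≤ m by lsc
  have hglsc := moreau_aux_lsc f hbot l hlsc x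
  have hgym : g y ≤ m := by
    by_contra hcon
    push_neg at hcon
    obtain ⟨r, hr1, hr2⟩ := EReal.lt_iff_exists_real_btwn.1 hcon
    have hev : ∀ᶠ z in 𝓝 y, (r : EReal) < g z := hglsc y r hr2
    have hev2 : ∀ᶠ n in atTop, (r : EReal) < g (Y n) := hy.eventually hev
    have hMr : M < r := by rw [hmM] at hr1; exact_mod_cast hr1
    obtain ⟨N1, hN1⟩ := hev2.exists_forall_of_atTop
    obtain ⟨N2, hN2⟩ := exists_nat_gt (1 / (r - M))
    set n := max N1 N2 with hn
    have h1 : (r : EReal) < g (Y n) := hN1 n (le_max_left _ _)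
    rw [hgY n] at h1
    have h1' : r < G n := by exact_mod_cast h1
    have h2 : G n < M + 1 / (n + 1) := hGlt n
    have h3 : 1 / ((n:ℝ) + 1) < r - M := by
      have hrM : (0:ℝ) < r - M := by linarith
      rw [div_lt_iff₀ (by positivity : (0:ℝ) < (n:ℝ) + 1)]
      rw [div_lt_iff₀ hrM] at hN2
      have : (N2:ℝ) ≤ (n:ℝ) := by exact_mod_cast le_max_right N1 N2
      nlinarith [hrM]
    have hfin : G n < M + (r - M) := h2.trans (by linarith)
    linarith [h1', hfin]
  exact ⟨y, fun z => hgym.trans (iInf_le g z)⟩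

end MoreauAux

/-- Moreau envelope on a Hilbert space. -/
noncomputable def moreauEnvH {H : Type*} [NormedAddCommGroup H] [InnerProductSpace ℝ H]
    (f : H → EReal) (l : ℝ) (x : H) : EReal :=
  ⨅ y, f y + ((‖x - y‖ ^ 2 / (2 * l) : ℝ) : EReal)

/-- For a proper l.s.c. convex function on a real Hilbert space, the infimum defining the
Moreau envelope is attained at a unique point (the proximal point), and the envelope is
Fréchet differentiable with gradient `(x - prox_{λf}(x))/λ`. -/
theorem moreauEnvH_prox_and_gradient {H : Type*} [NormedAddCommGroup H]
    [InnerProductSpace ℝ H] [CompleteSpace H] (f : H → EReal)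
    (hbot : ∀ x, f x ≠ ⊥) (hproper : ∃ x, f x ≠ ⊤)
    (hlsc : LowerSemicontinuous f)
    (hconv : ∀ x y : H, ∀ t ∈ Set.Icc (0 : ℝ) 1,
      f (t • x + (1 - t) • y) ≤ (t : EReal) * f x + ((1 - t : ℝ) : EReal) * f y)
    (l : ℝ) (hl : 0 < l) :
    ∀ x : H,
      (∃! y : H, ∀ z : H,
        f y + ((‖x - y‖ ^ 2 / (2 * l) : ℝ) : EReal) ≤
          f z + ((‖x - z‖ ^ 2 / (2 * l) : ℝ) : EReal)) ∧
      (∃ y : H,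
        (∀ z : H, f y + ((‖x - y‖ ^ 2 / (2 * l) : ℝ) : EReal) ≤
          f z + ((‖x - z‖ ^ 2 / (2 * l) : ℝ) : EReal)) ∧
        HasGradientAt (fun w => (moreauEnvH f l w).toReal) (l⁻¹ • (x - y)) x) := by
  have hex := moreau_aux_exists f hbot hproper hlsc hconv l hl
  choose p hp using hex
  obtain ⟨x0, hx0⟩ := hproper
  have hptop : ∀ w, f (p w) ≠ ⊤ := by
    intro w h
    have h2 := hp w x0
    rw [h, EReal.top_add_coe] at h2
    exact (EReal.add_lt_top hx0 (EReal.coe_ne_top _)).ne (top_le_iff.1 h2)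
  have hpbot : ∀ w, f (p w) ≠ ⊥ := fun w => hbot (p w)
  set E : H → ℝ := fun w => (f (p w)).toReal + ‖w - p w‖ ^ 2 / (2 * l) with hE
  have hcoe : ∀ w z : H, f (p w) + ((‖z - p w‖ ^ 2 / (2 * l) : ℝ) : EReal)
      = (((f (p w)).toReal + ‖z - p w‖ ^ 2 / (2 * l) : ℝ) : EReal) := by
    intro w z
    rw [EReal.coe_add, EReal.coe_toReal (hptop w) (hpbot w)]
  have hval : ∀ w : H, f (p w) + ((‖w - p w‖ ^ 2 / (2 * l) : ℝ) : EReal) = ((E w : ℝ) : EReal) :=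
    fun w => hcoe w w
  -- uniqueness
  have huniq : ∀ x y1 y2 : H,
      (∀ z : H, f y1 + ((‖x - y1‖ ^ 2 / (2 * l) : ℝ) : EReal) ≤
        f z + ((‖x - z‖ ^ 2 / (2 * l) : ℝ) : EReal)) →
      (∀ z : H, f y2 + ((‖x - y2‖ ^ 2 / (2 * l) : ℝ) : EReal) ≤
        f z + ((‖x - z‖ ^ 2 / (2 * l) : ℝ) : EReal)) → y1 = y2 := by
    intro x y1 y2 h1 h2
    have ht1 : f y1 ≠ ⊤ := by
      intro h
      have := h1 x0
      rw [h, EReal.top_add_coe] at this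
      exact (EReal.add_lt_top hx0 (EReal.coe_ne_top _)).ne (top_le_iff.1 this)
    have ht2 : f y2 ≠ ⊤ := by
      intro h
      have := h2 x0
      rw [h, EReal.top_add_coe] at this
      exact (EReal.add_lt_top hx0 (EReal.coe_ne_top _)).ne (top_le_iff.1 this)
    set G1 : ℝ := (f y1).toReal + ‖x - y1‖ ^ 2 / (2 * l) with hG1
    set G2 : ℝ := (f y2).toReal + ‖x - y2‖ ^ 2 / (2 * l) with hG2
    have hc1 : f y1 + ((‖x - y1‖ ^ 2 / (2 * l) : ℝ) : EReal) = ((G1 : ℝ) : EReal) := by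
      rw [hG1, EReal.coe_add, EReal.coe_toReal ht1 (hbot y1)]
    have hc2 : f y2 + ((‖x - y2‖ ^ 2 / (2 * l) : ℝ) : EReal) = ((G2 : ℝ) : EReal) := by
      rw [hG2, EReal.coe_add, EReal.coe_toReal ht2 (hbot y2)]
    have h12 : G1 ≤ G2 := by
      have := h1 y2; rw [hc1, hc2] at this; exact_mod_cast this
    have h21 : G2 ≤ G1 := by
      have := h2 y1; rw [hc2, hc1] at this; exact_mod_cast this
    have hmid := moreau_aux_mid f hbot hconv l hl x y1 y2 ht1 ht2
    have hmin := h1 ((1/2 : ℝ) • y1 + (1/2 : ℝ) • y2)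
    rw [hc1] at hmin
    have hcomb : ((G1 : ℝ) : EReal)
        ≤ (((G1 + G2) / 2 - ‖y1 - y2‖ ^ 2 / (8 * l) : ℝ) : EReal) := hmin.trans hmid
    clear_value G1 G2
    have hreal : G1 ≤ (G1 + G2) / 2 - ‖y1 - y2‖ ^ 2 / (8 * l) := by exact_mod_cast hcomb
    have hnn : ‖y1 - y2‖ ^ 2 / (8 * l) ≤ 0 := by linarith
    have hz : ‖y1 - y2‖ ^ 2 ≤ 0 := by
      rw [div_le_iff₀ (by positivity : (0:ℝ) < 8 * l)] at hnn
      linarith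
    have : ‖y1 - y2‖ = 0 := by nlinarith [norm_nonneg (y1 - y2)]
    rw [norm_eq_zero, sub_eq_zero] at this
    exact this
  -- envelope equals E
  have henv : ∀ w, moreauEnvH f l w = ((E w : ℝ) : EReal) := by
    intro w
    apply le_antisymm
    · rw [← hval w]; exact iInf_le _ (p w)
    · refine le_iInf fun z => ?_
      rw [← hval w]; exact hp w z
  have henvR : (fun w => (moreauEnvH f l w).toReal) = E := by
    funext w; rw [henv w]; exact EReal.toReal_coe _
  -- key inequality (i)
  have hEle : ∀ w z : H, E z ≤ (f (p w)).toReal + ‖z - p w‖ ^ 2 / (2 * l) := by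
    intro w z
    have h1 := hp z (p w)
    rw [hval z, hcoe w z] at h1
    exact_mod_cast h1
  -- midpoint convexity of E
  have hmidE : ∀ z z' : H, E ((1/2 : ℝ) • z + (1/2 : ℝ) • z') ≤ (E z + E z') / 2 := by
    intro z z'
    set w : H := (1/2 : ℝ) • z + (1/2 : ℝ) • z' with hw
    set m0 : H := (1/2 : ℝ) • p z + (1/2 : ℝ) • p z' with hm0
    have hq : ‖w - m0‖ ^ 2 ≤ (‖z - p z‖ ^ 2 + ‖z' - p z'‖ ^ 2) / 2 := by
      have e1 : w - m0 = (1/2 : ℝ) • ((z - p z) + (z' - p z')) := by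
        rw [hw, hm0]; module
      rw [e1, norm_smul]
      have htri := norm_add_le (z - p z) (z' - p z')
      have h2 : ‖(z - p z) + (z' - p z')‖ ^ 2 ≤ (‖z - p z‖ + ‖z' - p z'‖) ^ 2 :=
        pow_le_pow_left₀ (norm_nonneg _) htri 2
      have h3 : ‖(1/2 : ℝ)‖ = 1/2 := by norm_num
      rw [h3]
      nlinarith [sq_nonneg (‖z - p z‖ - ‖z' - p z'‖), norm_nonneg ((z - p z) + (z' - p z'))]
    have hconvhalf : f m0 ≤ ((((f (p z)).toReal + (f (p z')).toReal) / 2 : ℝ) : EReal) := by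
      have h := hconv (p z) (p z') (1/2) ⟨by norm_num, by norm_num⟩
      rw [show f (p z) = ((f (p z)).toReal : EReal) from (EReal.coe_toReal (hptop z) (hpbot z)).symm,
        show f (p z') = ((f (p z')).toReal : EReal) from (EReal.coe_toReal (hptop z') (hpbot z')).symm,
        ← EReal.coe_mul, ← EReal.coe_mul, ← EReal.coe_add] at h
      have harg : (1 - (1/2 : ℝ)) = (1/2 : ℝ) := by norm_num
      rw [harg] at h
      refine h.trans ?_
      exact_mod_cast le_of_eq (by ring)
    have h1 := hp w m0
    rw [hval w] at h1
    have h2 : f m0 + ((‖w - m0‖ ^ 2 / (2 * l) : ℝ) : EReal)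
        ≤ ((((f (p z)).toReal + (f (p z')).toReal) / 2 + ‖w - m0‖ ^ 2 / (2 * l) : ℝ) : EReal) := by
      rw [EReal.coe_add]
      exact add_le_add hconvhalf le_rfl
    have h3 : ((E w : ℝ) : EReal)
        ≤ ((((f (p z)).toReal + (f (p z')).toReal) / 2 + ‖w - m0‖ ^ 2 / (2 * l) : ℝ) : EReal) :=
      h1.trans h2
    have h4 : E w ≤ ((f (p z)).toReal + (f (p z')).toReal) / 2 + ‖w - m0‖ ^ 2 / (2 * l) := by
      exact_mod_cast h3
    have h5 : ‖w - m0‖ ^ 2 / (2 * l) ≤ ((‖z - p z‖ ^ 2 + ‖z' - p z'‖ ^ 2) / 2) / (2 * l) := by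
      exact div_le_div_of_nonneg_right hq (by positivity)
    have hEz : E z = (f (p z)).toReal + ‖z - p z‖ ^ 2 / (2 * l) := by rw [hE]
    have hEz' : E z' = (f (p z')).toReal + ‖z' - p z'‖ ^ 2 / (2 * l) := by rw [hE]
    rw [hEz, hEz']
    have : ((‖z - p z‖ ^ 2 + ‖z' - p z'‖ ^ 2) / 2) / (2 * l)
        = (‖z - p z‖ ^ 2 / (2 * l) + ‖z' - p z'‖ ^ 2 / (2 * l)) / 2 := by ring
    linarith [h4, h5]
  have hupper : ∀ z w : H, E z - E w
      ≤ (inner ℝ (l⁻¹ • (w - p w)) (z - w) : ℝ) + ‖z - w‖ ^ 2 / (2 * l) := by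
    intro z w
    have h1 := hEle w z
    have hEw : E w = (f (p w)).toReal + ‖w - p w‖ ^ 2 / (2 * l) := by rw [hE]
    have hexp : ‖z - p w‖ ^ 2
        = ‖z - w‖ ^ 2 + 2 * (inner ℝ (z - w) (w - p w) : ℝ) + ‖w - p w‖ ^ 2 := by
      have hns := norm_add_sq_real (z - w) (w - p w)
      rw [show (z - w) + (w - p w) = z - p w by abel] at hns
      linarith [hns]
    have hinner : (inner ℝ (l⁻¹ • (w - p w)) (z - w) : ℝ)
        = (inner ℝ (z - w) (w - p w) : ℝ) / l := by
      rw [real_inner_smul_left, real_inner_comm]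
      field_simp
    rw [hinner]
    have h2 : ‖z - p w‖ ^ 2 / (2 * l)
        = ‖z - w‖ ^ 2 / (2 * l) + (inner ℝ (z - w) (w - p w) : ℝ) / l
          + ‖w - p w‖ ^ 2 / (2 * l) := by
      rw [hexp]
      field_simp
    linarith [h1, h2, hEw]
  intro x
  have hlower : ∀ z : H, (inner ℝ (l⁻¹ • (x - p x)) (z - x) : ℝ) - ‖z - x‖ ^ 2 / (2 * l)
      ≤ E z - E x := by
    intro z
    have hmid := hmidE z ((2:ℝ) • x - z)
    have hpt : (1/2 : ℝ) • z + (1/2 : ℝ) • ((2:ℝ) • x - z) = x := by module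
    rw [hpt] at hmid
    have hup := hupper ((2:ℝ) • x - z) x
    have hd : (2:ℝ) • x - z - x = x - z := by module
    rw [hd] at hup
    have hi : (inner ℝ (l⁻¹ • (x - p x)) (x - z) : ℝ)
        = - (inner ℝ (l⁻¹ • (x - p x)) (z - x) : ℝ) := by
      rw [show x - z = -(z - x) by abel, inner_neg_right]
    have hn : ‖x - z‖ = ‖z - x‖ := norm_sub_rev x z
    rw [hi, hn] at hup
    linarith [hmid, hup]
  refine ⟨⟨p x, hp x, fun y hy => huniq x y (p x) hy (hp x)⟩, p x, hp x, ?_⟩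
  rw [henvR, hasGradientAt_iff_isLittleO, Asymptotics.isLittleO_iff]
  intro c hc
  have hten : Tendsto (fun z : H => ‖z - x‖) (𝓝 x) (𝓝 0) := by
    have hcont : Continuous fun z : H => ‖z - x‖ := (continuous_id.sub continuous_const).norm
    have h0 := hcont.tendsto x
    simpa using h0
  have hev : ∀ᶠ z in 𝓝 x, ‖z - x‖ ≤ 2 * l * c :=
    hten.eventually (eventually_le_nhds (by positivity))
  filter_upwards [hev] with z hz
  have h1 := hupper z x
  have h2 := hlower z
  have habs : |E z - E x - (inner ℝ (l⁻¹ • (x - p x)) (z - x) : ℝ)| ≤ ‖z - x‖ ^ 2 / (2 * l) := by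
    rw [abs_le]
    exact ⟨by linarith [h2], by linarith [h1]⟩
  have hb : ‖z - x‖ ^ 2 / (2 * l) ≤ c * ‖z - x‖ := by
    rw [div_le_iff₀ (by positivity : (0:ℝ) < 2 * l)]
    nlinarith [norm_nonneg (z - x), hz]
  calc ‖E z - E x - (inner ℝ (l⁻¹ • (x - p x)) (z - x) : ℝ)‖
      = |E z - E x - (inner ℝ (l⁻¹ • (x - p x)) (z - x) : ℝ)| := Real.norm_eq_abs _
  _ ≤ ‖z - x‖ ^ 2 / (2 * l) := habs
  _ ≤ c * ‖z - x‖ := hb
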